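/- arXiv:0902.0899 — 2 statements merged into one kernel-verified Lean document; each statement's English description precedes it below -/
import Mathlib

section
/- Soundness of CSMS: every L_CSL-formula derivable in the Hilbert system CSMS is valid in every CSL-preferential model. -/
/-- Formulas of the language L_CSL: propositional variables, ⊥, negation,
conjunction, and the comparative similarity connective `cls` (A ⇇ B). -/
inductive CSLForm : Type
  | var : ℕ → CSLForm
  | bot : CSLForm
  | neg : CSLForm → CSLForm
  | and : CSLForm → CSLForm → CSLForm
  | cls : CSLForm → CSLForm → CSLForm

namespace CSLForm

def top : CSLForm := neg bot
def or (A B : CSLForm) : CSLForm := neg (and (neg A) (neg B))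
def imp (A B : CSLForm) : CSLForm := or (neg A) B

end CSLForm

/-- A boolean valuation respecting the classical connectives
(⇇-formulas and variables are treated as atoms). -/
def IsBoolVal (v : CSLForm → Bool) : Prop :=
  v .bot = false ∧ (∀ A, v (.neg A) = !v A) ∧ (∀ A B, v (.and A B) = (v A && v B))

/-- Classical tautologies of L_CSL. -/
def CSLTautology (A : CSLForm) : Prop := ∀ v, IsBoolVal v → v A = true

/-- The Hilbert system CSMS. -/
inductive CSMS : CSLForm → Prop
  | taut {A : CSLForm} : CSLTautology A → CSMS A
  | mp {A B : CSLForm} : CSMS (A.imp B) → CSMS A → CSMS B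
  | mon {A B : CSLForm} (C : CSLForm) : CSMS (A.imp B) → CSMS ((A.cls C).imp (B.cls C))
  | ax1 (A B : CSLForm) : CSMS ((A.cls B).neg.or (B.cls A).neg)
  | ax2 (A B C : CSLForm) : CSMS ((A.cls B).imp ((A.cls C).or (C.cls B)))
  | ax3 (A B : CSLForm) : CSMS ((A.and B.neg).imp (A.cls B))
  | ax4 (A B : CSLForm) : CSMS ((A.cls B).imp B.neg)
  | ax5 (A B C : CSLForm) : CSMS (((A.cls B).and (A.cls C)).imp (A.cls (B.or C)))
  | ax6 (A : CSLForm) : CSMS ((A.cls .bot).imp (((A.cls .bot).neg.cls .bot).neg))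

/-- Semantic extension of a formula, given preferential relations
`pref w x y` (meaning x ≺_w y) and a valuation of propositional variables. -/
def prefEval {W : Type} (pref : W → W → W → Prop) (val : ℕ → Set W) :
    CSLForm → Set W
  | .var i => val i
  | .bot => ∅
  | .neg A => (prefEval pref val A)ᶜ
  | .and A B => prefEval pref val A ∩ prefEval pref val B
  | .cls A B =>
      {w | ∃ x ∈ prefEval pref val A, ∀ y ∈ prefEval pref val B, pref w x y}

/-- A CSL-preferential model. -/
structure CSLPrefModel (W : Type) where
  ne : Nonempty W
  pref : W → W → W → Prop
  modular : ∀ w x y z, pref w x y → pref w z y ∨ pref w x z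
  centered : ∀ w x, x = w ∨ pref w w x
  limit : ∀ w (X : Set W), X.Nonempty → {y ∈ X | ∀ z, pref w z y → z ∉ X}.Nonempty
  val : ℕ → Set W

def CSLPrefModel.eval {W : Type} (M : CSLPrefModel W) : CSLForm → Set W :=
  prefEval M.pref M.val

/-- Distance from a point to a set, in ℝ≥0∞ (so that it is ∞ on the empty set). -/
noncomputable def setDist {W : Type} (d : W → W → ℝ) (w : W) (X : Set W) : ENNReal :=
  ⨅ x ∈ X, ENNReal.ofReal (d w x)

/-- A CSL-distance minspace model. -/
structure CSLMinModel (W : Type) where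
  ne : Nonempty W
  dist : W → W → ℝ
  dist_nonneg : ∀ x y, 0 ≤ dist x y
  dist_eq_zero : ∀ x y, dist x y = 0 ↔ x = y
  min_attained : ∀ (w : W) (X : Set W), X.Nonempty → ∃ x ∈ X, ∀ y ∈ X, dist w x ≤ dist w y
  val : ℕ → Set W

noncomputable def CSLMinModel.eval {W : Type} (M : CSLMinModel W) : CSLForm → Set W
  | .var i => M.val i
  | .bot => ∅
  | .neg A => (M.eval A)ᶜ
  | .and A B => M.eval A ∩ M.eval B
  | .cls A B => {w | setDist M.dist w (M.eval A) < setDist M.dist w (M.eval B)}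

/-- Iterated disjunction of a list of formulas. -/
def bigOr : List CSLForm → CSLForm
  | [] => .bot
  | [A] => A
  | A :: B :: rest => A.or (bigOr (B :: rest))

/-- Iterated conjunction of a list of formulas. -/
def bigAnd : List CSLForm → CSLForm
  | [] => .top
  | [A] => A
  | A :: B :: rest => A.and (bigAnd (B :: rest))

/-- Γ is inconsistent wrt CSMS: there are A₁,…,Aₙ ∈ Γ (n ≥ 1) with ⊢ ¬A₁ ⊔ … ⊔ ¬Aₙ. -/
def Inconsistent (Γ : Set CSLForm) : Prop :=
  ∃ L : List CSLForm, L ≠ [] ∧ (∀ A ∈ L, A ∈ Γ) ∧ CSMS (bigOr (L.map .neg))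

def Consistent (Γ : Set CSLForm) : Prop := ¬ Inconsistent Γ

def MaxConsistent (Γ : Set CSLForm) : Prop :=
  Consistent Γ ∧ ∀ A, A ∉ Γ → Inconsistent (insert A Γ)

/-- w^A = {¬B | (A ⇇ B) ∈ w}. -/
def projSet (w : Set CSLForm) (A : CSLForm) : Set CSLForm :=
  {F | ∃ B, F = CSLForm.neg B ∧ (A.cls B) ∈ w}

/-- R(x,y) iff every A ∈ y satisfies (A ⇇ ⊥) ∈ x. -/
def Rrel (x y : Set CSLForm) : Prop := ∀ A, A ∈ y → (A.cls .bot) ∈ x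

/-- The canonical preferential relation: x ≺_w y iff
∃ B ∈ y such that ∀ A ∈ x, (A ⇇ B) ∈ w. -/
def canonPrec (w x y : Set CSLForm) : Prop :=
  ∃ B, B ∈ y ∧ ∀ A, A ∈ x → (A.cls B) ∈ w

/-!
Validity of each axiom at a world `w` only needs a frame property of `≺_w`: asymmetry (which the
Limit Assumption gives, applied to `{x, y}`) for axiom 1, modularity for axiom 2, centering for
axiom 3, centering and asymmetry for axiom 4, modularity and asymmetry for axiom 5, nothing for
axiom 6. Tautologies are valid because membership in the extensions at a fixed world is a boolean
valuation, and (Mon) preserves validity because `⇇` is monotone in its first argument.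
-/

namespace CSLForm

variable {W : Type} {pref : W → W → W → Prop} {val : ℕ → Set W} {w : W}

@[simp]
theorem mem_prefEval_neg {A : CSLForm} : w ∈ prefEval pref val A.neg ↔ w ∉ prefEval pref val A :=
  Iff.rfl

@[simp]
theorem mem_prefEval_and {A B : CSLForm} :
    w ∈ prefEval pref val (A.and B) ↔ w ∈ prefEval pref val A ∧ w ∈ prefEval pref val B :=
  Iff.rfl

@[simp]
theorem mem_prefEval_cls {A B : CSLForm} :
    w ∈ prefEval pref val (A.cls B) ↔
      ∃ x ∈ prefEval pref val A, ∀ y ∈ prefEval pref val B, pref w x y :=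
  Iff.rfl

@[simp]
theorem mem_prefEval_or {A B : CSLForm} :
    w ∈ prefEval pref val (A.or B) ↔ w ∈ prefEval pref val A ∨ w ∈ prefEval pref val B := by
  simp only [or, mem_prefEval_neg, mem_prefEval_and]
  tauto

@[simp]
theorem mem_prefEval_imp {A B : CSLForm} :
    w ∈ prefEval pref val (A.imp B) ↔ (w ∈ prefEval pref val A → w ∈ prefEval pref val B) := by
  simp only [imp, mem_prefEval_or, mem_prefEval_neg]
  tauto

open scoped Classical in
theorem isBoolVal_mem_prefEval (pref : W → W → W → Prop) (val : ℕ → Set W) (w : W) :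
    IsBoolVal fun A => decide (w ∈ prefEval pref val A) := by
  refine ⟨?_, fun A => ?_, fun A B => ?_⟩ <;> simp [prefEval]

theorem mem_prefEval_of_tautology {A : CSLForm} (hA : CSLTautology A) :
    w ∈ prefEval pref val A := by
  classical
  simpa using hA _ (isBoolVal_mem_prefEval pref val w)

theorem prefEval_cls_mono_left {A B : CSLForm} (C : CSLForm)
    (hAB : prefEval pref val A ⊆ prefEval pref val B) :
    prefEval pref val (A.cls C) ⊆ prefEval pref val (B.cls C) := by
  rintro w ⟨x, hx, hxC⟩
  exact ⟨x, hAB hx, hxC⟩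

theorem mem_prefEval_ax1 (asymm : ∀ x y, pref w x y → ¬ pref w y x) (A B : CSLForm) :
    w ∈ prefEval pref val ((A.cls B).neg.or (B.cls A).neg) := by
  rw [mem_prefEval_or, mem_prefEval_neg, mem_prefEval_neg, ← not_and_or]
  rintro ⟨⟨x, hx, hxB⟩, ⟨y, hy, hyA⟩⟩
  exact asymm x y (hxB y hy) (hyA x hx)

theorem mem_prefEval_ax2 (modular : ∀ x y z, pref w x y → pref w z y ∨ pref w x z)
    (A B C : CSLForm) : w ∈ prefEval pref val ((A.cls B).imp ((A.cls C).or (C.cls B))) := by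
  simp only [mem_prefEval_imp, mem_prefEval_or, mem_prefEval_cls]
  rintro ⟨x, hx, hxB⟩
  by_cases hxC : ∀ c ∈ prefEval pref val C, pref w x c
  · exact Or.inl ⟨x, hx, hxC⟩
  · push Not at hxC
    obtain ⟨c, hc, hxc⟩ := hxC
    exact Or.inr ⟨c, hc, fun y hy => (modular x y c (hxB y hy)).resolve_right hxc⟩

theorem mem_prefEval_ax3 (centered : ∀ x, x = w ∨ pref w w x) (A B : CSLForm) :
    w ∈ prefEval pref val ((A.and B.neg).imp (A.cls B)) := by
  simp only [mem_prefEval_imp, mem_prefEval_and, mem_prefEval_neg, mem_prefEval_cls]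
  rintro ⟨hA, hB⟩
  refine ⟨w, hA, fun y hy => (centered y).resolve_left ?_⟩
  rintro rfl
  exact hB hy

theorem mem_prefEval_ax4 (centered : ∀ x, x = w ∨ pref w w x)
    (asymm : ∀ x y, pref w x y → ¬ pref w y x) (A B : CSLForm) :
    w ∈ prefEval pref val ((A.cls B).imp B.neg) := by
  simp only [mem_prefEval_imp, mem_prefEval_cls, mem_prefEval_neg]
  rintro ⟨x, -, hxB⟩ hB
  have hxw := hxB w hB
  rcases centered x with rfl | hwx
  · exact asymm x x hxw hxw
  · exact asymm x w hxw hwx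

theorem mem_prefEval_ax5 (modular : ∀ x y z, pref w x y → pref w z y ∨ pref w x z)
    (asymm : ∀ x y, pref w x y → ¬ pref w y x) (A B C : CSLForm) :
    w ∈ prefEval pref val (((A.cls B).and (A.cls C)).imp (A.cls (B.or C))) := by
  simp only [mem_prefEval_imp, mem_prefEval_and, mem_prefEval_cls, mem_prefEval_or]
  rintro ⟨⟨x, hx, hxB⟩, ⟨y, hy, hyC⟩⟩
  by_cases hxC : ∀ c ∈ prefEval pref val C, pref w x c
  · exact ⟨x, hx, fun z => Or.rec (hxB z) (hxC z)⟩
  · push Not at hxC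
    obtain ⟨c, hc, hxc⟩ := hxC
    -- `c` lies below all of `B` and `y` below `c`, so `y` lies below all of `B` too.
    have hcB : ∀ b ∈ prefEval pref val B, pref w c b :=
      fun b hb => (modular x b c (hxB b hb)).resolve_right hxc
    refine ⟨y, hy, fun z => Or.rec (fun hz => ?_) (hyC z)⟩
    exact (modular c z y (hcB z hz)).resolve_right (asymm y c (hyC c hc))

theorem mem_prefEval_ax6 (A : CSLForm) :
    w ∈ prefEval pref val ((A.cls .bot).imp (((A.cls .bot).neg.cls .bot).neg)) := by
  simp only [mem_prefEval_imp, mem_prefEval_neg, mem_prefEval_cls]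
  rintro ⟨x, hx, -⟩ ⟨z, hz, -⟩
  exact hz ⟨x, hx, fun y hy => hy.elim⟩

end CSLForm

namespace CSLPrefModel

open CSLForm

variable {W : Type} (M : CSLPrefModel W)

theorem pref_asymm (w x y : W) (hxy : M.pref w x y) : ¬ M.pref w y x := by
  intro hyx
  obtain ⟨z, hz, hmin⟩ := M.limit w {x, y} ⟨x, Set.mem_insert x {y}⟩
  rcases hz with rfl | rfl
  · exact hmin y hyx (Set.mem_insert_of_mem z rfl)
  · exact hmin x hxy (Set.mem_insert x {z})

theorem mem_eval_of_CSMS {A : CSLForm} (h : CSMS A) (w : W) : w ∈ M.eval A := by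
  induction h generalizing w with
  | taut hA => exact mem_prefEval_of_tautology hA
  | mp _ _ ihAB ihA => exact mem_prefEval_imp.1 (ihAB w) (ihA w)
  | mon C _ ih =>
    exact mem_prefEval_imp.2 fun hw =>
      prefEval_cls_mono_left C (fun x hx => mem_prefEval_imp.1 (ih x) hx) hw
  | ax1 A B => exact mem_prefEval_ax1 (M.pref_asymm w) A B
  | ax2 A B C => exact mem_prefEval_ax2 (M.modular w) A B C
  | ax3 A B => exact mem_prefEval_ax3 (M.centered w) A B
  | ax4 A B => exact mem_prefEval_ax4 (M.centered w) (M.pref_asymm w) A B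
  | ax5 A B C => exact mem_prefEval_ax5 (M.modular w) (M.pref_asymm w) A B C
  | ax6 A => exact mem_prefEval_ax6 A

end CSLPrefModel

/-- soundness of CSMS with respect to CSL-preferential models. -/
theorem CSMS_sound (A : CSLForm) (h : CSMS A) :
    ∀ (W : Type) (M : CSLPrefModel W), M.eval A = Set.univ :=
  fun _ M => Set.eq_univ_of_forall (M.mem_eval_of_CSMS h)
end

section
/- An L_CSL-formula is derivable in the Hilbert system CSMS if and only if it is valid in every CSL-distance minspace model. -/
/-!
Soundness: since distances to nonempty sets are attained, `A ⇇ B` holds at `w` iff some point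
of `A` is strictly closer to `w` than every point of `B`, and each axiom becomes a fact about
strict orders.

Completeness: a non-derivable `A` is missing from some maximal consistent set `w₀`. The worlds
of the countermodel are the maximal consistent sets `w` with `R(w₀, w)`. Each such `w` orders the
finitely many subformulas of `A` by `C ≺ B ↔ (C ⇇ B) ∈ w`, a strict weak order by axioms 1
and 2, and the distance from `w` to `x ≠ w` is one more than the largest rank of a subformula
true at `x`. Lindenbaum constructions preserving `M ⇇ B ∈ w`, resp. `C ⇇ M ∉ w`, provide the
witnesses showing that a subformula `A ⇇ B` is true at `w` iff it belongs to `w`.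
-/

namespace IsBoolVal

variable {v : CSLForm → Bool} (hv : IsBoolVal v)
include hv

theorem bot_iff : v .bot = true ↔ False := by simp [hv.1]

theorem neg_iff (A : CSLForm) : v A.neg = true ↔ ¬v A = true := by simp [hv.2.1]

theorem and_iff (A B : CSLForm) : v (A.and B) = true ↔ v A = true ∧ v B = true := by
  simp [hv.2.2]

theorem or_iff (A B : CSLForm) : v (A.or B) = true ↔ v A = true ∨ v B = true := by
  simp only [CSLForm.or, hv.neg_iff, hv.and_iff]; tauto

theorem imp_iff (A B : CSLForm) : v (A.imp B) = true ↔ (v A = true → v B = true) := by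
  simp only [CSLForm.imp, hv.or_iff, hv.neg_iff]; tauto

theorem top_eq_true : v .top = true := by simp [CSLForm.top, hv.neg_iff, hv.bot_iff]

theorem bigAnd_iff : ∀ L : List CSLForm, v (bigAnd L) = true ↔ ∀ B ∈ L, v B = true
  | [] => by simp [bigAnd, hv.top_eq_true]
  | [A] => by simp [bigAnd]
  | A :: B :: L => by simp [bigAnd, hv.and_iff, bigAnd_iff (B :: L)]

theorem bigOr_iff : ∀ L : List CSLForm, v (bigOr L) = true ↔ ∃ B ∈ L, v B = true
  | [] => by simp [bigOr, hv.bot_iff]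
  | [A] => by simp [bigOr]
  | A :: B :: L => by simp [bigOr, hv.or_iff, bigOr_iff (B :: L)]

end IsBoolVal

namespace CSMS

variable {A B C M M' : CSLForm}

theorem and_intro (hA : CSMS A) (hB : CSMS B) : CSMS (A.and B) :=
  mp (mp (taut fun v hv => by simp only [hv.imp_iff, hv.and_iff]; tauto) hA) hB

theorem of_taut_imp (hA : CSMS A) (h : ∀ v, IsBoolVal v → v A = true → v B = true) : CSMS B :=
  mp (taut fun v hv => (hv.imp_iff A B).mpr (h v hv)) hA

theorem imp_and_or_and_neg (M D : CSLForm) :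
    CSMS (M.imp ((M.and D).or (M.and D.neg))) :=
  taut fun v hv => by simp only [hv.imp_iff, hv.or_iff, hv.and_iff, hv.neg_iff]; tauto

theorem imp_bot_of_neg (h : CSMS M.neg) : CSMS (M.imp .bot) :=
  h.of_taut_imp fun v hv => by simp only [hv.imp_iff, hv.neg_iff, hv.bot_iff]; tauto

theorem imp_trans (hAB : CSMS (A.imp B)) (hBC : CSMS (B.imp C)) : CSMS (A.imp C) :=
  (hAB.and_intro hBC).of_taut_imp fun v hv => by simp only [hv.imp_iff, hv.and_iff]; tauto

theorem neg_cls_self (X : CSLForm) : CSMS (X.cls X).neg :=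
  (ax1 X X).of_taut_imp fun v hv => by simp only [hv.or_iff, hv.neg_iff]; tauto

theorem neg_bot_cls (X : CSLForm) : CSMS (CSLForm.bot.cls X).neg :=
  ((mon (A := .bot) (B := X) X (taut fun v hv => by simp [hv.imp_iff, hv.bot_iff])).and_intro
    (neg_cls_self X)).of_taut_imp fun v hv => by
      simp only [hv.imp_iff, hv.and_iff, hv.neg_iff]; tauto

theorem mon_right (h : CSMS (M.imp M')) (C : CSLForm) : CSMS ((C.cls M').imp (C.cls M)) :=
  (((ax2 C M' M).and_intro (mon M' h)).and_intro (neg_cls_self M')).of_taut_imp fun v hv => by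
    simp only [hv.imp_iff, hv.or_iff, hv.and_iff, hv.neg_iff]; tauto

/-- If `X ⊔ Y` were closer than `Z` while neither `X` nor `Y` is, then by axiom 2 it would be
closer than both `X` and `Y`, hence than itself by axiom 5. -/
theorem cls_or_left (X Y Z : CSLForm) :
    CSMS (((X.or Y).cls Z).imp ((X.cls Z).or (Y.cls Z))) :=
  ((((ax2 (X.or Y) Z X).and_intro (ax2 (X.or Y) Z Y)).and_intro (ax5 (X.or Y) X Y)).and_intro
    (neg_cls_self (X.or Y))).of_taut_imp fun v hv => by
      simp only [hv.imp_iff, hv.or_iff, hv.and_iff, hv.neg_iff]; tauto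

theorem cls_imp_cls_bot (C B : CSLForm) : CSMS ((C.cls B).imp (C.cls .bot)) :=
  ((ax2 C B .bot).and_intro (neg_bot_cls B)).of_taut_imp fun v hv => by
    simp only [hv.imp_iff, hv.or_iff, hv.and_iff, hv.neg_iff]; tauto

theorem imp_cls_bot (A : CSLForm) : CSMS (A.imp (A.cls .bot)) :=
  (ax3 A .bot).of_taut_imp fun v hv => by
    simp only [hv.imp_iff, hv.and_iff, hv.neg_iff, hv.bot_iff]; tauto

theorem cls_bot_cls_bot (A : CSLForm) :
    CSMS (((A.cls .bot).cls .bot).imp (A.cls .bot)) :=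
  (((mon .bot (ax6 A)).and_intro (ax6 (A.cls .bot).neg)).and_intro
    (imp_cls_bot (A.cls .bot).neg)).of_taut_imp fun v hv => by
      simp only [hv.imp_iff, hv.and_iff, hv.neg_iff]; tauto

theorem neg_cls_bot_cls_bot (A : CSLForm) :
    CSMS (((A.cls .bot).neg.cls .bot).imp (A.cls .bot).neg) :=
  (ax6 A).of_taut_imp fun v hv => by simp only [hv.imp_iff, hv.neg_iff]; tauto

end CSMS

namespace CSLMinModel

variable {W : Type} (M : CSLMinModel W) {w x : W} {X Y : Set W}

theorem setDist_eq_of_forall_le (hx : x ∈ X) (h : ∀ y ∈ X, M.dist w x ≤ M.dist w y) :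
    setDist M.dist w X = ENNReal.ofReal (M.dist w x) :=
  le_antisymm (iInf₂_le x hx) (le_iInf₂ fun y hy => ENNReal.ofReal_le_ofReal (h y hy))

theorem setDist_lt_setDist_iff :
    setDist M.dist w X < setDist M.dist w Y ↔ ∃ x ∈ X, ∀ y ∈ Y, M.dist w x < M.dist w y := by
  constructor
  · intro h
    have hX : X.Nonempty := Set.nonempty_iff_ne_empty.mpr (by rintro rfl; simp [setDist] at h)
    obtain ⟨x, hx, hmin⟩ := M.min_attained w X hX
    rw [M.setDist_eq_of_forall_le hx hmin] at h
    exact ⟨x, hx, fun y hy => (ENNReal.ofReal_lt_ofReal_iff_of_nonneg (M.dist_nonneg w x)).mp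
      (h.trans_le (iInf₂_le y hy))⟩
  · rintro ⟨x, hx, hlt⟩
    refine (iInf₂_le x hx : setDist M.dist w X ≤ _).trans_lt ?_
    rcases Y.eq_empty_or_nonempty with rfl | hY
    · simp [setDist]
    obtain ⟨y, hy, hmin⟩ := M.min_attained w Y hY
    rw [M.setDist_eq_of_forall_le hy hmin]
    exact ENNReal.ofReal_lt_ofReal_iff'.mpr ⟨hlt y hy, (M.dist_nonneg w x).trans_lt (hlt y hy)⟩

theorem mem_eval_cls_iff {A B : CSLForm} :
    w ∈ M.eval (A.cls B) ↔ ∃ x ∈ M.eval A, ∀ y ∈ M.eval B, M.dist w x < M.dist w y :=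
  M.setDist_lt_setDist_iff

theorem mem_eval_cls_bot_iff {A : CSLForm} : w ∈ M.eval (A.cls .bot) ↔ (M.eval A).Nonempty := by
  rw [M.mem_eval_cls_iff]; simp [eval, Set.Nonempty]

theorem eval_or (A B : CSLForm) : M.eval (A.or B) = M.eval A ∪ M.eval B := by
  simp [CSLForm.or, eval, Set.compl_inter]

theorem eval_imp_eq_univ {A B : CSLForm} :
    M.eval (A.imp B) = Set.univ ↔ M.eval A ⊆ M.eval B := by
  simp [CSLForm.imp, eval_or, eval, Set.eq_univ_iff_forall, Set.subset_def, imp_iff_not_or]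

theorem dist_self_lt_dist (hx : x ≠ w) : M.dist w w < M.dist w x := by
  rw [(M.dist_eq_zero w w).mpr rfl]
  exact (M.dist_nonneg w x).lt_of_ne fun h => hx ((M.dist_eq_zero w x).mp h.symm).symm

end CSLMinModel

open CSLMinModel in
theorem CSMS.sound {A : CSLForm} (h : CSMS A) {W : Type} (M : CSLMinModel W) :
    M.eval A = Set.univ := by
  induction h with
  | taut hA =>
    classical
    refine Set.eq_univ_of_forall fun w => ?_
    have hv : IsBoolVal fun F => decide (w ∈ M.eval F) :=
      ⟨by simp [eval], fun _ => by simp [eval], fun _ _ => by simp [eval]⟩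
    simpa using hA _ hv
  | mp _ _ ihAB ihA => rwa [eval_imp_eq_univ, ihA, Set.univ_subset_iff] at ihAB
  | mon C _ ih =>
    rw [M.eval_imp_eq_univ] at ih ⊢
    intro w
    simp only [mem_eval_cls_iff]
    exact fun ⟨x, hx, hlt⟩ => ⟨x, ih hx, hlt⟩
  | ax1 A B =>
    refine Set.eq_univ_of_forall fun w => ?_
    simp only [eval_or, eval, Set.mem_union, Set.mem_compl_iff, Set.mem_ofPred_eq]
    by_contra! h
    exact lt_asymm h.1 h.2
  | ax2 A B C =>
    refine M.eval_imp_eq_univ.mpr fun w hw => ?_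
    obtain ⟨x, hx, hxB⟩ := M.mem_eval_cls_iff.mp hw
    rw [eval_or]
    by_cases hC : ∀ z ∈ M.eval C, M.dist w x < M.dist w z
    · exact Or.inl (M.mem_eval_cls_iff.mpr ⟨x, hx, hC⟩)
    · push Not at hC
      obtain ⟨z, hz, hzx⟩ := hC
      exact Or.inr (M.mem_eval_cls_iff.mpr ⟨z, hz, fun y hy => hzx.trans_lt (hxB y hy)⟩)
  | ax3 A B =>
    refine M.eval_imp_eq_univ.mpr fun w ⟨hA, hB⟩ => M.mem_eval_cls_iff.mpr ⟨w, hA, fun y hy => ?_⟩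
    exact M.dist_self_lt_dist fun h => hB (h ▸ hy)
  | ax4 A B =>
    refine M.eval_imp_eq_univ.mpr fun w hw hB => ?_
    obtain ⟨x, -, hx⟩ := M.mem_eval_cls_iff.mp hw
    have := hx w hB
    rw [(M.dist_eq_zero w w).mpr rfl] at this
    exact (M.dist_nonneg w x).not_gt this
  | ax5 A B C =>
    refine M.eval_imp_eq_univ.mpr fun w ⟨hB, hC⟩ => ?_
    obtain ⟨x, hx, hxB⟩ := M.mem_eval_cls_iff.mp hB
    obtain ⟨x', hx', hxC⟩ := M.mem_eval_cls_iff.mp hC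
    rw [mem_eval_cls_iff, eval_or]
    rcases le_total (M.dist w x) (M.dist w x') with h | h
    · exact ⟨x, hx, fun y hy => hy.elim (hxB y) fun hy => h.trans_lt (hxC y hy)⟩
    · exact ⟨x', hx', fun y hy => hy.elim (fun hy => h.trans_lt (hxB y hy)) (hxC y)⟩
  | ax6 A =>
    refine M.eval_imp_eq_univ.mpr fun w hw hw' => ?_
    obtain ⟨u, hu⟩ := M.mem_eval_cls_bot_iff.mp hw'
    exact hu (M.mem_eval_cls_bot_iff.mpr (M.mem_eval_cls_bot_iff.mp hw))

theorem CSMS.not_bot : ¬CSMS .bot := fun h =>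
  Set.empty_ne_univ <| h.sound
    { ne := ⟨()⟩, dist := fun _ _ => 0, dist_nonneg := fun _ _ => le_rfl
      dist_eq_zero := fun _ _ => by simp
      min_attained := fun _ _ ⟨x, hx⟩ => ⟨x, hx, fun _ _ => le_rfl⟩
      val := fun _ => ∅ }

section Consistency

variable {Γ w : Set CSLForm} {A B C : CSLForm}

theorem inconsistent_iff :
    Inconsistent Γ ↔ ∃ L : List CSLForm, (∀ A ∈ L, A ∈ Γ) ∧ CSMS (bigAnd L).neg := by
  constructor
  · rintro ⟨L, -, hL, h⟩
    refine ⟨L, hL, h.of_taut_imp fun v hv => ?_⟩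
    simp only [hv.bigOr_iff, List.mem_map, exists_exists_and_eq_and, hv.neg_iff, hv.bigAnd_iff]
    grind
  · rintro ⟨L, hL, h⟩
    rcases L with _ | ⟨A, L⟩
    · exact (CSMS.not_bot (h.of_taut_imp fun v hv => by
        simp [bigAnd, hv.neg_iff, hv.top_eq_true])).elim
    refine ⟨A :: L, List.cons_ne_nil A L, hL, h.of_taut_imp fun v hv => ?_⟩
    simp only [hv.bigOr_iff, List.mem_map, exists_exists_and_eq_and, hv.neg_iff, hv.bigAnd_iff]
    grind

theorem inconsistent_of_mem_of_neg_mem (hA : A ∈ Γ) (hnA : A.neg ∈ Γ) : Inconsistent Γ :=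
  inconsistent_iff.mpr ⟨[A, A.neg], by simp [hA, hnA],
    CSMS.taut fun v hv => by simp only [bigAnd, hv.neg_iff, hv.and_iff]; tauto⟩

open Classical in
theorem Inconsistent.exists_bigAnd_imp_neg (h : Inconsistent (insert A Γ)) :
    ∃ L : List CSLForm, (∀ B ∈ L, B ∈ Γ) ∧ CSMS ((bigAnd L).imp A.neg) := by
  obtain ⟨L, hL, hneg⟩ := inconsistent_iff.mp h
  refine ⟨L.filter (· ≠ A), fun B hB => ?_, hneg.of_taut_imp fun v hv => ?_⟩
  · simp only [List.mem_filter, decide_eq_true_eq] at hB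
    exact (hL B hB.1).resolve_left hB.2
  · simp only [hv.imp_iff, hv.neg_iff, hv.bigAnd_iff, List.mem_filter, decide_eq_true_eq]
    grind

namespace MaxConsistent

variable (hw : MaxConsistent w)
include hw

theorem mem_of_bigAnd_imp {L : List CSLForm} (hL : ∀ B ∈ L, B ∈ w)
    (h : CSMS ((bigAnd L).imp C)) : C ∈ w := by
  by_contra hC
  obtain ⟨L', hL', h'⟩ := (hw.2 C hC).exists_bigAnd_imp_neg
  refine hw.1 (inconsistent_iff.mpr ⟨L ++ L', by simp only [List.mem_append]; grind,
    (h.and_intro h').of_taut_imp fun v hv => ?_⟩)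
  simp only [hv.and_iff, hv.imp_iff, hv.neg_iff, hv.bigAnd_iff, List.mem_append]
  grind

theorem mem_of_csms (h : CSMS A) : A ∈ w :=
  hw.mem_of_bigAnd_imp (L := []) (by simp)
    (h.of_taut_imp fun v hv => by simp only [hv.imp_iff]; tauto)

theorem mem_of_imp (h : CSMS (A.imp B)) (hA : A ∈ w) : B ∈ w :=
  hw.mem_of_bigAnd_imp (L := [A]) (by simpa using hA) h

theorem neg_mem_iff : A.neg ∈ w ↔ A ∉ w :=
  ⟨fun hn hA => hw.1 (inconsistent_of_mem_of_neg_mem hA hn), fun hA =>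
    let ⟨_, hL, h⟩ := (hw.2 A hA).exists_bigAnd_imp_neg
    hw.mem_of_bigAnd_imp hL h⟩

theorem and_mem_iff : A.and B ∈ w ↔ A ∈ w ∧ B ∈ w := by
  refine ⟨fun h => ⟨hw.mem_of_imp ?_ h, hw.mem_of_imp ?_ h⟩, fun h =>
    hw.mem_of_bigAnd_imp (L := [A, B]) (by simpa using h) ?_⟩ <;>
  exact CSMS.taut fun v hv => by simp only [bigAnd, hv.imp_iff, hv.and_iff]; tauto

theorem or_mem_iff : A.or B ∈ w ↔ A ∈ w ∨ B ∈ w := by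
  simp only [CSLForm.or, hw.neg_mem_iff, hw.and_mem_iff]; tauto

theorem bot_not_mem : CSLForm.bot ∉ w :=
  hw.neg_mem_iff.mp (hw.mem_of_csms (CSMS.taut fun v hv => by simp [hv.neg_iff, hv.bot_iff]))

theorem cls_self_not_mem : A.cls A ∉ w :=
  hw.neg_mem_iff.mp (hw.mem_of_csms (CSMS.neg_cls_self A))

theorem cls_or_cls_of_cls (h : A.cls B ∈ w) (C : CSLForm) : A.cls C ∈ w ∨ C.cls B ∈ w :=
  hw.or_mem_iff.mp (hw.mem_of_imp (CSMS.ax2 A B C) h)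

theorem cls_trans (hAB : A.cls B ∈ w) (hBC : B.cls C ∈ w) : A.cls C ∈ w :=
  (hw.cls_or_cls_of_cls hAB C).resolve_right fun hCB =>
    (hw.or_mem_iff.mp (hw.mem_of_csms (CSMS.ax1 B C))).elim
      (fun h => hw.neg_mem_iff.mp h hBC) (fun h => hw.neg_mem_iff.mp h hCB)

end MaxConsistent

end Consistency

namespace CSLForm

def encode : CSLForm → ℕ
  | var i => Nat.pair 0 i
  | bot => Nat.pair 1 0
  | neg A => Nat.pair 2 A.encode
  | and A B => Nat.pair 3 (Nat.pair A.encode B.encode)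
  | cls A B => Nat.pair 4 (Nat.pair A.encode B.encode)

theorem encode_injective : Function.Injective encode := by
  intro A
  induction A <;> intro B <;> cases B <;> simp [encode, Nat.pair_eq_pair] <;> grind

instance : Nonempty CSLForm := ⟨bot⟩

noncomputable def enum : ℕ → CSLForm := Function.invFun encode

theorem enum_surjective : Function.Surjective enum :=
  Function.invFun_surjective encode_injective

end CSLForm

theorem bigAnd_mem_of_and_mem {y : Set CSLForm} (htop : CSLForm.top ∈ y)
    (hand : ∀ B C, B ∈ y → C ∈ y → B.and C ∈ y) : ∀ L, (∀ B ∈ L, B ∈ y) → bigAnd L ∈ y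
  | [] => fun _ => htop
  | [B] => fun h => h B (by simp)
  | B :: C :: L => fun h =>
    hand _ _ (h B (by simp))
      (bigAnd_mem_of_and_mem htop hand (C :: L) fun D hD => h D (by simp [hD]))

section Lindenbaum

variable (P : CSLForm → Prop) (A : CSLForm)

open Classical in
noncomputable def splitChain : ℕ → CSLForm
  | 0 => A
  | n + 1 =>
    if P ((splitChain n).and (CSLForm.enum n)) then (splitChain n).and (CSLForm.enum n)
    else (splitChain n).and (CSLForm.enum n).neg

variable {P A}

theorem splitChain_spec (hA : P A) (hsplit : ∀ M D, P M → P (M.and D) ∨ P (M.and D.neg)) :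
    ∀ n, P (splitChain P A n)
  | 0 => hA
  | n + 1 => by
    unfold splitChain
    split_ifs with h
    · exact h
    · exact (hsplit _ _ (splitChain_spec hA hsplit n)).resolve_left h

theorem splitChain_succ_imp (n : ℕ) :
    CSMS ((splitChain P A (n + 1)).imp (splitChain P A n)) ∧
      (CSMS ((splitChain P A (n + 1)).imp (CSLForm.enum n)) ∨
        CSMS ((splitChain P A (n + 1)).imp (CSLForm.enum n).neg)) := by
  have hl (M D : CSLForm) : CSMS ((M.and D).imp M) ∧ CSMS ((M.and D).imp D) :=
    ⟨CSMS.taut fun v hv => by simp only [hv.imp_iff, hv.and_iff]; tauto,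
      CSMS.taut fun v hv => by simp only [hv.imp_iff, hv.and_iff]; tauto⟩
  rw [splitChain]
  split_ifs
  · exact ⟨(hl _ _).1, Or.inl (hl _ _).2⟩
  · exact ⟨(hl _ _).1, Or.inr (hl _ _).2⟩

theorem splitChain_imp_of_le {m n : ℕ} (h : m ≤ n) :
    CSMS ((splitChain P A n).imp (splitChain P A m)) := by
  induction n, h using Nat.le_induction with
  | base => exact CSMS.taut fun v hv => by simp only [hv.imp_iff]; tauto
  | succ n _ ih => exact (splitChain_succ_imp n).1.imp_trans ih

theorem exists_maxConsistent_of_split (hA : P A)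
    (hsplit : ∀ M D, P M → P (M.and D) ∨ P (M.and D.neg))
    (hcons : ∀ M, P M → ¬CSMS M.neg) :
    ∃ y, MaxConsistent y ∧ A ∈ y ∧ ∀ C ∈ y, ∃ M, P M ∧ CSMS (M.imp C) := by
  set y : Set CSLForm := {C | ∃ n, CSMS ((splitChain P A n).imp C)}
  have and_mem (B C : CSLForm) : B ∈ y → C ∈ y → B.and C ∈ y := by
    rintro ⟨m, hm⟩ ⟨n, hn⟩
    refine ⟨max m n, (((splitChain_imp_of_le (le_max_left m n)).imp_trans hm).and_intro
      ((splitChain_imp_of_le (le_max_right m n)).imp_trans hn)).of_taut_imp fun v hv => ?_⟩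
    simp only [hv.imp_iff, hv.and_iff]; tauto
  have top_mem : CSLForm.top ∈ y :=
    ⟨0, CSMS.taut fun v hv => by simp [hv.imp_iff, hv.top_eq_true]⟩
  refine ⟨y, ⟨fun hinc => ?_, fun C hC => ?_⟩, ⟨0, ?_⟩, ?_⟩
  · obtain ⟨L, hL, hneg⟩ := inconsistent_iff.mp hinc
    obtain ⟨n, hn⟩ := bigAnd_mem_of_and_mem top_mem and_mem L hL
    refine hcons _ (splitChain_spec hA hsplit n) ((hn.and_intro hneg).of_taut_imp fun v hv => ?_)
    simp only [hv.imp_iff, hv.and_iff, hv.neg_iff]; tauto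
  · obtain ⟨n, rfl⟩ := CSLForm.enum_surjective C
    refine ((splitChain_succ_imp n).2.elim (fun h => (hC ⟨n + 1, h⟩).elim) fun h => ?_)
    exact inconsistent_of_mem_of_neg_mem (Set.mem_insert _ y)
      (Set.mem_insert_of_mem _ ⟨n + 1, h⟩)
  · exact splitChain_imp_of_le le_rfl
  · rintro C ⟨n, hn⟩
    exact ⟨_, splitChain_spec hA hsplit n, hn⟩

theorem exists_maxConsistent_not_mem (h : ¬CSMS A) : ∃ w, MaxConsistent w ∧ A ∉ w := by
  obtain ⟨w, hw, hA, -⟩ :=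
    exists_maxConsistent_of_split (P := fun M => ¬CSMS M.neg) (A := A.neg)
    (fun hA => h (hA.of_taut_imp fun v hv => by simp only [hv.neg_iff]; tauto))
    (fun M D hM => by
      by_contra! hMD
      exact hM ((hMD.1.and_intro hMD.2).of_taut_imp fun v hv => by
        simp only [hv.and_iff, hv.neg_iff]; tauto))
    fun _ => id
  exact ⟨w, hw, hw.neg_mem_iff.mp hA⟩

end Lindenbaum

namespace MaxConsistent

variable {w : Set CSLForm} {A B C : CSLForm} (hw : MaxConsistent w)
include hw

theorem rrel_self : Rrel w w := fun C => hw.mem_of_imp (CSMS.imp_cls_bot C)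

theorem exists_rrel_forall_cls_mem (h : A.cls B ∈ w) :
    ∃ x, MaxConsistent x ∧ Rrel w x ∧ A ∈ x ∧ ∀ C ∈ x, C.cls B ∈ w := by
  obtain ⟨x, hx, hAx, himp⟩ := exists_maxConsistent_of_split (P := fun M => M.cls B ∈ w) h
    (fun M D hM => hw.or_mem_iff.mp <| hw.mem_of_imp (CSMS.cls_or_left _ _ B) <|
      hw.mem_of_imp (CSMS.mon B (CSMS.imp_and_or_and_neg M D)) hM)
    (fun M hM hneg => hw.neg_mem_iff.mp (hw.mem_of_csms (CSMS.neg_bot_cls B))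
      (hw.mem_of_imp (CSMS.mon B hneg.imp_bot_of_neg) hM))
  have hcls (C : CSLForm) (hC : C ∈ x) : C.cls B ∈ w :=
    let ⟨_, hM, hMC⟩ := himp C hC
    hw.mem_of_imp (CSMS.mon B hMC) hM
  exact ⟨x, hx, fun C hC => hw.mem_of_imp (CSMS.cls_imp_cls_bot C B) (hcls C hC), hAx, hcls⟩

theorem exists_rrel_forall_cls_not_mem (hC : C.cls .bot ∈ w) (h : C.cls B ∉ w) :
    ∃ z, MaxConsistent z ∧ Rrel w z ∧ B ∈ z ∧ ∀ D ∈ z, C.cls D ∉ w := by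
  obtain ⟨z, hz, hBz, himp⟩ := exists_maxConsistent_of_split (P := fun M => C.cls M ∉ w) h
    (fun M D hM => by
      by_contra! hMD
      exact hM <| hw.mem_of_imp (CSMS.mon_right (CSMS.imp_and_or_and_neg M D) C) <|
        hw.mem_of_imp (CSMS.ax5 C _ _) (hw.and_mem_iff.mpr hMD))
    (fun M hM hneg => hM (hw.mem_of_imp (CSMS.mon_right hneg.imp_bot_of_neg C) hC))
  have hncls (D : CSLForm) (hD : D ∈ z) : C.cls D ∉ w := fun hCD =>
    let ⟨_, hM, hMD⟩ := himp D hD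
    hM (hw.mem_of_imp (CSMS.mon_right hMD C) hCD)
  exact ⟨z, hz, fun D hD => (hw.cls_or_cls_of_cls hC D).resolve_left (hncls D hD), hBz, hncls⟩

end MaxConsistent

section Cluster

variable {w₀ w x : Set CSLForm} {C : CSLForm}

theorem Rrel.cls_bot_mem_iff (hw₀ : MaxConsistent w₀) (hw : MaxConsistent w) (h : Rrel w₀ w) :
    C.cls .bot ∈ w ↔ C.cls .bot ∈ w₀ := by
  refine ⟨fun hC => hw₀.mem_of_imp (CSMS.cls_bot_cls_bot C) (h _ hC), fun hC => ?_⟩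
  by_contra hn
  exact hw₀.neg_mem_iff.mp
    (hw₀.mem_of_imp (CSMS.neg_cls_bot_cls_bot C) (h _ (hw.neg_mem_iff.mpr hn))) hC

theorem Rrel.euclidean (hw₀ : MaxConsistent w₀) (hw : MaxConsistent w) (h : Rrel w₀ w)
    (hx : Rrel w₀ x) : Rrel w x :=
  fun C hC => (h.cls_bot_mem_iff hw₀ hw).mpr (hx C hC)

theorem Rrel.trans (hw₀ : MaxConsistent w₀) (hw : MaxConsistent w) (h : Rrel w₀ w)
    (hx : Rrel w x) : Rrel w₀ x :=
  fun C hC => (h.cls_bot_mem_iff hw₀ hw).mp (hx C hC)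

end Cluster

open Classical in
noncomputable def CSLForm.subformulas : CSLForm → Finset CSLForm
  | var i => {var i}
  | bot => {bot}
  | neg A => insert A.neg A.subformulas
  | and A B => insert (A.and B) (A.subformulas ∪ B.subformulas)
  | cls A B => insert (A.cls B) (A.subformulas ∪ B.subformulas)

theorem CSLForm.mem_subformulas_self (A : CSLForm) : A ∈ A.subformulas := by
  cases A <;> simp [subformulas]

section Canonical

open Classical

variable {S : Finset CSLForm} {w₀ w x y : Set CSLForm} {A B C : CSLForm}

noncomputable def rank (S : Finset CSLForm) (w : Set CSLForm) (C : CSLForm) : ℕ :=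
  (S.filter fun D => D.cls C ∈ w).card

theorem MaxConsistent.rank_lt_rank (hw : MaxConsistent w) (hC : C ∈ S) (h : C.cls B ∈ w) :
    rank S w C < rank S w B := by
  refine Finset.card_lt_card ((Finset.ssubset_iff_of_subset fun D hD => ?_).mpr ⟨C, ?_, ?_⟩)
  · simp only [Finset.mem_filter] at hD ⊢
    exact ⟨hD.1, hw.cls_trans hD.2 h⟩
  · simp [hC, h]
  · simp [hw.cls_self_not_mem]

theorem MaxConsistent.rank_le_rank (hw : MaxConsistent w) (h : B.cls C ∉ w) :
    rank S w C ≤ rank S w B := by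
  refine Finset.card_le_card fun D hD => ?_
  simp only [Finset.mem_filter] at hD ⊢
  exact ⟨hD.1, ((hw.cls_or_cls_of_cls hD.2 B).resolve_right h)⟩

noncomputable def canonDist (S : Finset CSLForm) (w x : Set CSLForm) : ℕ :=
  if x = w then 0 else (S.filter (· ∈ x)).sup (rank S w) + 1

theorem canonDist_eq_zero_iff : canonDist S w x = 0 ↔ x = w := by
  unfold canonDist; split_ifs <;> simp_all

theorem rank_lt_canonDist (hB : B ∈ S) (hBx : B ∈ x) (hxw : x ≠ w) :
    rank S w B < canonDist S w x := by
  rw [canonDist, if_neg hxw, Nat.lt_succ_iff]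
  exact Finset.le_sup (f := rank S w) (Finset.mem_filter.mpr ⟨hB, hBx⟩)

theorem MaxConsistent.canonDist_le_rank (hw : MaxConsistent w) (hA : A ∈ S) (hAx : A ∈ x)
    (hx : ∀ C ∈ x, C.cls B ∈ w) : canonDist S w x ≤ rank S w B := by
  unfold canonDist
  split_ifs
  · exact Nat.zero_le _
  refine Nat.succ_le_of_lt ((Finset.sup_lt_iff ?_).mpr fun C hC => ?_)
  · exact (Nat.zero_le _).trans_lt (hw.rank_lt_rank hA (hx A hAx))
  · rw [Finset.mem_filter] at hC
    exact hw.rank_lt_rank hC.1 (hx C hC.2)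

theorem MaxConsistent.canonDist_le_rank_succ (hw : MaxConsistent w)
    (hx : ∀ D ∈ x, C.cls D ∉ w) : canonDist S w x ≤ rank S w C + 1 := by
  unfold canonDist
  split_ifs
  · exact Nat.zero_le _
  refine Nat.succ_le_succ (Finset.sup_le fun D hD => ?_)
  exact hw.rank_le_rank (hx D (Finset.mem_filter.mp hD).2)

theorem exists_canonDist_lt (hw₀ : MaxConsistent w₀) (hw : MaxConsistent w) (hw₀w : Rrel w₀ w)
    (hA : A ∈ S) (hB : B ∈ S) (hAB : A.cls B ∈ w) :
    ∃ x, MaxConsistent x ∧ Rrel w₀ x ∧ A ∈ x ∧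
      ∀ y, B ∈ y → canonDist S w x < canonDist S w y := by
  obtain ⟨x, hx, hwx, hAx, hxB⟩ := hw.exists_rrel_forall_cls_mem hAB
  have hBw : B ∉ w := hw.neg_mem_iff.mp (hw.mem_of_imp (CSMS.ax4 A B) hAB)
  exact ⟨x, hx, hw₀w.trans hw₀ hw hwx, hAx, fun y hBy =>
    (hw.canonDist_le_rank hA hAx hxB).trans_lt
      (rank_lt_canonDist hB hBy fun hyw => hBw (hyw ▸ hBy))⟩

theorem exists_canonDist_le (hw₀ : MaxConsistent w₀) (hw : MaxConsistent w) (hw₀w : Rrel w₀ w)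
    (hA : A ∈ S) (hAB : A.cls B ∉ w) (hw₀y : Rrel w₀ y) (hAy : A ∈ y) :
    ∃ z, MaxConsistent z ∧ Rrel w₀ z ∧ B ∈ z ∧ canonDist S w z ≤ canonDist S w y := by
  by_cases hAw : A ∈ w
  · have hBw : B ∈ w := by
      by_contra hBw
      exact hAB (hw.mem_of_imp (CSMS.ax3 A B) (hw.and_mem_iff.mpr ⟨hAw, hw.neg_mem_iff.mpr hBw⟩))
    exact ⟨w, hw, hw₀w, hBw, by simp [canonDist]⟩
  obtain ⟨C, hC, hCmax⟩ := (S.filter (· ∈ y)).exists_max_image (rank S w)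
    ⟨A, Finset.mem_filter.mpr ⟨hA, hAy⟩⟩
  rw [Finset.mem_filter] at hC
  have hCB : C.cls B ∉ w := fun hCB =>
    (hw.rank_lt_rank hC.1 ((hw.cls_or_cls_of_cls hCB A).resolve_right hAB)).not_ge
      (hCmax A (Finset.mem_filter.mpr ⟨hA, hAy⟩))
  obtain ⟨z, hz, hwz, hBz, hzC⟩ :=
    hw.exists_rrel_forall_cls_not_mem ((hw₀w.euclidean hw₀ hw hw₀y) C hC.2) hCB
  exact ⟨z, hz, hw₀w.trans hw₀ hw hwz, hBz, (hw.canonDist_le_rank_succ hzC).trans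
    (rank_lt_canonDist hC.1 hC.2 fun hyw => hAw (hyw ▸ hAy))⟩

variable (S)

noncomputable def canonModel (hw₀ : MaxConsistent w₀) :
    CSLMinModel {w // MaxConsistent w ∧ Rrel w₀ w} where
  ne := ⟨⟨w₀, hw₀, hw₀.rrel_self⟩⟩
  dist w x := canonDist S w.1 x.1
  dist_nonneg _ _ := Nat.cast_nonneg _
  dist_eq_zero w x := by rw [Nat.cast_eq_zero, canonDist_eq_zero_iff, eq_comm, Subtype.ext_iff]
  min_attained w X hX := by
    obtain ⟨x, hx, hmin⟩ :=
      (InvImage.wf (fun x => canonDist S w.1 x.1) wellFounded_lt).has_min X hX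
    exact ⟨x, hx, fun y hy => Nat.cast_le.mpr (not_lt.mp (hmin y hy))⟩
  val i := {w | CSLForm.var i ∈ w.1}

theorem mem_canonModel_eval_iff (hw₀ : MaxConsistent w₀) (hC : C.subformulas ⊆ S)
    (w : {w // MaxConsistent w ∧ Rrel w₀ w}) : w ∈ (canonModel S hw₀).eval C ↔ C ∈ w.1 := by
  induction C generalizing w with
  | var i => rfl
  | bot => simp [CSLMinModel.eval, w.2.1.bot_not_mem]
  | neg A ih =>
    simp only [CSLForm.subformulas, Finset.insert_subset_iff] at hC
    simp [CSLMinModel.eval, ih hC.2, w.2.1.neg_mem_iff]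
  | and A B ihA ihB =>
    simp only [CSLForm.subformulas, Finset.insert_subset_iff, Finset.union_subset_iff] at hC
    simp [CSLMinModel.eval, ihA hC.2.1, ihB hC.2.2, w.2.1.and_mem_iff]
  | cls A B ihA ihB =>
    simp only [CSLForm.subformulas, Finset.insert_subset_iff, Finset.union_subset_iff] at hC
    have hA := hC.2.1 A.mem_subformulas_self
    have hB := hC.2.2 B.mem_subformulas_self
    obtain ⟨w, hw, hw₀w⟩ := w
    simp only [CSLMinModel.mem_eval_cls_iff, ihA hC.2.1, ihB hC.2.2]
    constructor
    · rintro ⟨⟨y, _, hw₀y⟩, hAy, hlt⟩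
      by_contra hAB
      obtain ⟨z, hz, hw₀z, hBz, hle⟩ := exists_canonDist_le hw₀ hw hw₀w hA hAB hw₀y hAy
      exact (hlt ⟨z, hz, hw₀z⟩ hBz).not_ge (Nat.cast_le.mpr hle)
    · intro hAB
      obtain ⟨x, hx, hw₀x, hAx, hlt⟩ := exists_canonDist_lt hw₀ hw hw₀w hA hB hAB
      exact ⟨⟨x, hx, hw₀x⟩, hAx, fun y hBy => Nat.cast_lt.mpr (hlt y.1 hBy)⟩

end Canonical

theorem CSMS.complete {A : CSLForm}
    (h : ∀ (W : Type) (M : CSLMinModel W), M.eval A = Set.univ) : CSMS A := by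
  by_contra hA
  obtain ⟨w₀, hw₀, hAw₀⟩ := exists_maxConsistent_not_mem hA
  have hvalid := Set.eq_univ_iff_forall.mp (h _ (canonModel A.subformulas hw₀))
    ⟨w₀, hw₀, hw₀.rrel_self⟩
  exact hAw₀ ((mem_canonModel_eval_iff _ hw₀ subset_rfl _).mp hvalid)

/-- a formula is derivable in CSMS iff it is valid in every
CSL-distance minspace model. -/
theorem CSMS_iff_minspace_valid (A : CSLForm) :
    CSMS A ↔ ∀ (W : Type) (M : CSLMinModel W), M.eval A = Set.univ :=
  ⟨fun h _ M => h.sound M, CSMS.complete⟩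
end
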